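/- arXiv:1503.05822 — 4 statements merged into one kernel-verified Lean document; each statement's English description precedes it below -/
import Mathlib

section
/- Let p(x) = x(1−x). If y ∈ (0,1/100) ∪ (99/100,1), x₀ = c₋p(y) ≥ 1/100 for some 3/2 ≤ c₋ ≤ 4, and x₁ = c₀p(x₀), x₂ = c₁p(x₁) with 3/2 ≤ c₀, c₁ ≤ 4, then 1/100 ≤ x₂ ≤ 99/100. -/
/-- Two steps after entry: if y ∈ (0,1/100) ∪ (99/100,1), x₀ = cmp(y) ≥ 1/100
with 3/2 ≤ cm ≤ 4, and x₁ = c₀p(x₀), x₂ = c₁p(x₁) with 3/2 ≤ c₀, c₁ ≤ 4,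
then x₂ ∈ [1/100, 99/100]. -/
theorem two_steps_after_entry
    (y cm c₀ c₁ x₀ x₁ x₂ : ℝ)
    (hy : y ∈ Set.Ioo (0 : ℝ) (1 / 100) ∪ Set.Ioo (99 / 100 : ℝ) 1)
    (hcm : 3 / 2 ≤ cm ∧ cm ≤ 4) (hc₀ : 3 / 2 ≤ c₀ ∧ c₀ ≤ 4) (hc₁ : 3 / 2 ≤ c₁ ∧ c₁ ≤ 4)
    (hx₀ : x₀ = cm * (y * (1 - y))) (hx₀' : 1 / 100 ≤ x₀)
    (hx₁ : x₁ = c₀ * (x₀ * (1 - x₀)))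
    (hx₂ : x₂ = c₁ * (x₁ * (1 - x₁))) :
    1 / 100 ≤ x₂ ∧ x₂ ≤ 99 / 100 := by
  obtain ⟨hcm1, hcm2⟩ := hcm
  obtain ⟨hc01, hc02⟩ := hc₀
  obtain ⟨hc11, hc12⟩ := hc₁
  have hp : y * (1 - y) ≤ 1 / 100 := by
    rcases hy with h | h
    · nlinarith [h.1, h.2]
    · nlinarith [h.1, h.2]
  have hpnn : 0 ≤ y * (1 - y) := by
    rcases hy with h | h
    · nlinarith [h.1, h.2]
    · nlinarith [h.1, h.2]
  have hx0u : x₀ ≤ 1 / 25 := by rw [hx₀]; nlinarith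
  have hq : 0 ≤ (x₀ - 1 / 100) * (1 / 25 - x₀) :=
    mul_nonneg (by linarith) (by linarith)
  have hp0 : 0 ≤ x₀ * (1 - x₀) := mul_nonneg (by linarith) (by linarith)
  have hx1l : 1 / 100 ≤ x₁ := by
    rw [hx₁]; nlinarith [mul_nonneg (by linarith : (0:ℝ) ≤ c₀ - 3 / 2) hp0]
  have hx1u : x₁ ≤ 4 / 25 := by
    rw [hx₁]; nlinarith [mul_nonneg (by linarith : (0:ℝ) ≤ 4 - c₀) hp0]
  have hq1 : 0 ≤ (x₁ - 1 / 100) * (4 / 25 - x₁) :=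
    mul_nonneg (by linarith) (by linarith)
  have hp1 : 0 ≤ x₁ * (1 - x₁) := mul_nonneg (by linarith) (by linarith)
  constructor
  · rw [hx₂]; nlinarith [mul_nonneg (by linarith : (0:ℝ) ≤ c₁ - 3 / 2) hp1]
  · rw [hx₂]
    nlinarith [mul_nonneg (by linarith : (0:ℝ) ≤ 4 - c₁) hp1,
      mul_nonneg (by linarith : (0:ℝ) ≤ 4 / 25 - x₁) (by linarith : (0:ℝ) ≤ 21 / 25 - x₁)]
end

section
/- Let x_{k+1} = c(θ_k)p(x_k) with p(x) = x(1−x), 3/2 ≤ c(θ_k) ≤ 4, and suppose 0 < x_k < 1/100 for 0 ≤ k ≤ N. Then the correction factor C_N = ∏_{k=0}^{N} (1 − 2x_k)/(1 − x_k) satisfies 4/5 ≤ C_N ≤ 1. In particular ∏_{k=0}^{N} c(θ_k)p'(x_k) = C_N · ∏_{k=0}^{N} c(θ_k)(1 − x_k) with C_N ∈ [4/5, 1]. -/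
/-!
Since `(1 - 2x)/(1 - x) ∈ [1 - 2x, 1]` for `0 ≤ x ≤ 1/2`, the correction factor lies in
`[∏ (1 - 2 x_k), 1]`, and `∏ (1 - 2 x_k) ≥ 1 - 2 ∑ x_k` (Weierstrass product inequality). While the orbit stays below `1/100` and `c ≥ 3/2`, it grows
at least geometrically, `x_k ≤ (4/5) x_{k+1}`, so `∑_{k ≤ N} x_k ≤ 5 x_N < 1/20` and the
correction factor is at least `9/10`.
-/

open Finset

section OrderedField

variable {K : Type*} [Field K] [LinearOrder K] [IsStrictOrderedRing K]

theorem Finset.one_sub_sum_le_prod_one_sub {ι : Type*} (s : Finset ι) {a : ι → K}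
    (h0 : ∀ i ∈ s, 0 ≤ a i) (h1 : ∀ i ∈ s, a i ≤ 1) :
    1 - ∑ i ∈ s, a i ≤ ∏ i ∈ s, (1 - a i) := by
  classical
  induction s using Finset.induction_on with
  | empty => simp
  | insert j s hj ih =>
    rw [sum_insert hj, prod_insert hj]
    have hs : 0 ≤ ∑ i ∈ s, a i := sum_nonneg fun i hi => h0 i (mem_insert_of_mem hi)
    have hprod := ih (fun i hi => h0 i (mem_insert_of_mem hi))
      (fun i hi => h1 i (mem_insert_of_mem hi))
    have haj0 := h0 j (mem_insert_self j s)
    have haj1 := h1 j (mem_insert_self j s)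
    nlinarith [mul_le_mul_of_nonneg_left hprod (sub_nonneg.2 haj1), mul_nonneg haj0 hs]

theorem one_sub_mul_sum_range_le_of_le_mul_succ {r : K} {x : ℕ → K} {N : ℕ} (hr : 0 ≤ r)
    (hx : 0 ≤ x 0) (h : ∀ k < N, x k ≤ r * x (k + 1)) :
    (1 - r) * ∑ k ∈ range (N + 1), x k ≤ x N := by
  induction N with
  | zero => simp only [zero_add, range_one, sum_singleton]; nlinarith
  | succ N ih =>
    have hN := h N N.lt_succ_self
    have := ih fun k hk => h k (hk.trans N.lt_succ_self)
    rw [sum_range_succ]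
    linarith

theorem one_sub_two_mul_le_div_one_sub {t : K} (ht0 : 0 ≤ t) (ht : t ≤ 1 / 2) :
    1 - 2 * t ≤ (1 - 2 * t) / (1 - t) := by
  rw [le_div_iff₀ (by linarith)]
  nlinarith

theorem div_one_sub_le_one {t : K} (ht0 : 0 ≤ t) (ht : t < 1) :
    (1 - 2 * t) / (1 - t) ≤ 1 := by
  rw [div_le_one (by linarith)]
  linarith

theorem le_four_fifths_mul_logistic {c t : K} (hc : 3 / 2 ≤ c) (ht0 : 0 ≤ t) (ht : t ≤ 1 / 100) :
    t ≤ 4 / 5 * (c * (t * (1 - t))) := by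
  have : 99 / 100 * t ≤ t * (1 - t) := by nlinarith
  nlinarith

end OrderedField

/-- The correction factor C_N = ∏_{k=0}^{N} (1−2x_k)/(1−x_k) lies in [4/5, 1]
along an orbit staying in (0, 1/100), and it relates the product of the true
multipliers c·p' to the product of the factors c·(1−x). -/
theorem correction_factor_bounds
    (c : ℕ → ℝ) (hc : ∀ k, 3 / 2 ≤ c k ∧ c k ≤ 4)
    (x : ℕ → ℝ)
    (hiter : ∀ k, x (k + 1) = c k * (x k * (1 - x k)))
    (N : ℕ)
    (hx : ∀ k ≤ N, 0 < x k ∧ x k < 1 / 100) :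
    (4 / 5 ≤ ∏ k ∈ Finset.range (N + 1), (1 - 2 * x k) / (1 - x k)) ∧
    (∏ k ∈ Finset.range (N + 1), (1 - 2 * x k) / (1 - x k)) ≤ 1 ∧
    (∏ k ∈ Finset.range (N + 1), c k * (1 - 2 * x k)) =
      (∏ k ∈ Finset.range (N + 1), (1 - 2 * x k) / (1 - x k)) *
        ∏ k ∈ Finset.range (N + 1), c k * (1 - x k) := by
  have hx' : ∀ k ∈ range (N + 1), 0 < x k ∧ x k < 1 / 100 := fun k hk =>
    hx k (Nat.lt_succ_iff.mp (mem_range.mp hk))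
  have hsum : (1 - 4 / 5) * ∑ k ∈ range (N + 1), x k ≤ x N :=
    one_sub_mul_sum_range_le_of_le_mul_succ (by norm_num) (hx 0 N.zero_le).1.le fun k hk => hiter k ▸
      le_four_fifths_mul_logistic (hc k).1 (hx k hk.le).1.le (hx k hk.le).2.le
  have hprod : 1 - ∑ k ∈ range (N + 1), 2 * x k ≤ ∏ k ∈ range (N + 1), (1 - 2 * x k) :=
    one_sub_sum_le_prod_one_sub _ (fun k hk => by linarith [hx' k hk])
      (fun k hk => by linarith [hx' k hk])
  have hlower : ∏ k ∈ range (N + 1), (1 - 2 * x k) ≤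
      ∏ k ∈ range (N + 1), (1 - 2 * x k) / (1 - x k) :=
    prod_le_prod (fun k hk => by linarith [hx' k hk])
      (fun k hk => one_sub_two_mul_le_div_one_sub (hx' k hk).1.le (by linarith [hx' k hk]))
  refine ⟨?_, ?_, ?_⟩
  · rw [← mul_sum] at hprod
    linarith [hx N le_rfl]
  · exact prod_le_one (fun k hk => div_nonneg (by linarith [hx' k hk]) (by linarith [hx' k hk]))
      (fun k hk => div_one_sub_le_one (hx' k hk).1.le (by linarith [hx' k hk]))
  · rw [← prod_mul_distrib]
    refine prod_congr rfl fun k hk => ?_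
    have : 1 - x k ≠ 0 := by linarith [hx' k hk]
    field_simp
end

section
/- Let x_{k+1} = c(θ_k)p(x_k) with p(x) = x(1−x) and 3/2 ≤ c(θ_k) ≤ 4. Suppose 0 < x₀ < 1/100 and N ≥ 0 is the smallest integer with x_{N+1} ≥ 1/100. Then there is an absolute constant K > 0 (independent of x₀, θ₀, N) such that (1/K)·(1/x₀) ≤ ∏_{k=0}^{N} c(θ_k)p'(x_k) ≤ K·(1/x₀). -/
/-!
Since `x_{k+1} = c_k (1 - x_k) x_k`, the product `∏ c_k (1 - x_k)` telescopes to `x_{N+1} / x_0`,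
and `1/100 ≤ x_{N+1} ≤ 4 x_N ≤ 1/25`. Factorwise
`c_k (1 - x_k) (1 - 2x_k) ≤ c_k (1 - 2x_k) ≤ c_k (1 - x_k)`, so by the Weierstrass product
inequality `∏ c_k p'(x_k)` lies between `1 - 2 ∑ x_k` and `1` times `x_{N+1} / x_0`. Below `1/100`
the orbit grows geometrically, `x_{k+1} - x_k ≥ (2/5) x_k`, so telescoping once more gives
`∑_{k ≤ N} x_k ≤ (5/2) x_{N+1} ≤ 1/10`.
-/

open Finset

namespace Finset

variable {ι R : Type*} [CommRing R] [LinearOrder R] [IsStrictOrderedRing R]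
  {s : Finset ι} {a y : ι → R}

theorem one_sub_sum_le_prod_one_sub_s8 {f : ι → R} (h0 : ∀ i ∈ s, 0 ≤ f i) (h1 : ∀ i ∈ s, f i ≤ 1) :
    1 - ∑ i ∈ s, f i ≤ ∏ i ∈ s, (1 - f i) := by
  classical
  induction s using Finset.induction_on with
  | empty => simp
  | insert a s ha ih =>
    rw [sum_insert ha, prod_insert ha]
    have hs := ih (fun i hi => h0 i (mem_insert_of_mem hi)) fun i hi => h1 i (mem_insert_of_mem hi)
    have hfa : 0 ≤ 1 - f a := sub_nonneg.2 (h1 a (mem_insert_self a s))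
    have hsum : 0 ≤ f a * ∑ i ∈ s, f i :=
      mul_nonneg (h0 a (mem_insert_self a s)) (sum_nonneg fun i hi => h0 i (mem_insert_of_mem hi))
    nlinarith [mul_le_mul_of_nonneg_left hs hfa]

theorem prod_mul_one_sub_two_mul_le_prod_mul_one_sub (ha : ∀ i ∈ s, 0 ≤ a i)
    (hy : ∀ i ∈ s, 0 ≤ y i) (hy' : ∀ i ∈ s, 2 * y i ≤ 1) :
    ∏ i ∈ s, a i * (1 - 2 * y i) ≤ ∏ i ∈ s, a i * (1 - y i) :=
  prod_le_prod (fun i hi => mul_nonneg (ha i hi) (by linarith [hy' i hi]))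
    fun i hi => mul_le_mul_of_nonneg_left (by linarith [hy i hi]) (ha i hi)

theorem prod_mul_one_sub_mul_one_sub_sum_le_prod_mul_one_sub_two_mul (ha : ∀ i ∈ s, 0 ≤ a i)
    (hy : ∀ i ∈ s, 0 ≤ y i) (hy' : ∀ i ∈ s, 2 * y i ≤ 1) :
    (∏ i ∈ s, a i * (1 - y i)) * (1 - ∑ i ∈ s, 2 * y i) ≤ ∏ i ∈ s, a i * (1 - 2 * y i) :=
  calc (∏ i ∈ s, a i * (1 - y i)) * (1 - ∑ i ∈ s, 2 * y i)
      ≤ (∏ i ∈ s, a i * (1 - y i)) * ∏ i ∈ s, (1 - 2 * y i) :=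
        mul_le_mul_of_nonneg_left
          (one_sub_sum_le_prod_one_sub_s8 (fun i hi => by linarith [hy i hi]) hy')
          (prod_nonneg fun i hi => mul_nonneg (ha i hi) (by linarith [hy i hi, hy' i hi]))
    _ = ∏ i ∈ s, a i * (1 - y i) * (1 - 2 * y i) := prod_mul_distrib.symm
    _ ≤ ∏ i ∈ s, a i * (1 - 2 * y i) := by
        refine prod_le_prod (fun i hi => ?_) fun i hi => ?_
        · exact mul_nonneg (mul_nonneg (ha i hi) (by linarith [hy i hi, hy' i hi]))
            (by linarith [hy' i hi])
        · nlinarith [mul_nonneg (mul_nonneg (ha i hi) (hy i hi)) (sub_nonneg.2 (hy' i hi))]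

theorem prod_range_mul_eq_of_succ_eq_mul {M : Type*} [CommMonoid M] {a x : ℕ → M} {n : ℕ}
    (h : ∀ k < n, x (k + 1) = a k * x k) : (∏ k ∈ range n, a k) * x 0 = x n := by
  induction n with
  | zero => simp
  | succ n ih =>
    rw [prod_range_succ, mul_right_comm, ih fun k hk => h k (by omega), h n n.lt_succ_self,
      mul_comm]

theorem mul_sum_range_le_sub_of_mul_le_sub {G : Type*} [Ring G] [PartialOrder G]
    [IsOrderedAddMonoid G] {x : ℕ → G} {r : G} {n : ℕ}
    (h : ∀ k < n, r * x k ≤ x (k + 1) - x k) : r * ∑ k ∈ range n, x k ≤ x n - x 0 := by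
  rw [mul_sum, ← sum_range_sub]
  exact sum_le_sum fun k hk => h k (mem_range.1 hk)

end Finset

theorem logistic_orbit_pos {c x : ℕ → ℝ} (hc : ∀ k, 0 < c k)
    (hrec : ∀ k, x (k + 1) = c k * (x k * (1 - x k))) (hx0 : 0 < x 0) {N : ℕ}
    (hlt : ∀ k ≤ N, x k < 1) : ∀ k ≤ N + 1, 0 < x k := by
  intro k hk
  induction k with
  | zero => exact hx0
  | succ k ih =>
    rw [hrec k]
    exact mul_pos (hc k) (mul_pos (ih (by omega)) (sub_pos.2 (hlt k (by omega))))

theorem two_fifths_mul_le_logistic_sub {c x : ℝ} (hc : 3 / 2 ≤ c) (hx : 0 ≤ x)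
    (hx' : x < 1 / 100) :
    2 / 5 * x ≤ c * (x * (1 - x)) - x := by
  nlinarith [mul_nonneg (sub_nonneg.2 hc) (mul_nonneg hx (by linarith : (0 : ℝ) ≤ 1 - x))]

theorem logistic_le_four_mul {c x : ℝ} (hc : c ≤ 4) (hx : 0 ≤ x) (hx' : x ≤ 1) :
    c * (x * (1 - x)) ≤ 4 * x := by
  nlinarith [mul_le_mul_of_nonneg_right hc (mul_nonneg hx (sub_nonneg.2 hx'))]

/-- Along the escape from the bottom, the product of derivatives
∏_{k=0}^{N} c(θ_k)p'(x_k) is comparable to 1/x₀, with an absolute constant K. -/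
theorem product_comparable_to_inverse
    : ∃ K : ℝ, 0 < K ∧
      ∀ (c : ℕ → ℝ) (x : ℕ → ℝ) (N : ℕ),
        (∀ k, 3 / 2 ≤ c k ∧ c k ≤ 4) →
        (∀ k, x (k + 1) = c k * (x k * (1 - x k))) →
        0 < x 0 → x 0 < 1 / 100 →
        1 / 100 ≤ x (N + 1) →
        (∀ k ≤ N, x k < 1 / 100) →
        (1 / K) * (1 / x 0) ≤ (∏ k ∈ Finset.range (N + 1), c k * (1 - 2 * x k)) ∧
        (∏ k ∈ Finset.range (N + 1), c k * (1 - 2 * x k)) ≤ K * (1 / x 0) := by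
  refine ⟨125, by norm_num, fun c x N hc hrec hx0 _ hN hsmall => ?_⟩
  have hpos := logistic_orbit_pos (fun k => by linarith [(hc k).1]) hrec hx0
    fun k hk => by linarith [hsmall k hk]
  have hc0 : ∀ k ∈ range (N + 1), 0 ≤ c k := fun k _ => by linarith [(hc k).1]
  have hx : ∀ k ∈ range (N + 1), 0 ≤ x k := fun k hk =>
    (hpos k (by rw [mem_range] at hk; omega)).le
  have hx' : ∀ k ∈ range (N + 1), 2 * x k ≤ 1 := fun k hk => by
    linarith [hsmall k (Nat.le_of_lt_succ (mem_range.1 hk))]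
  have htel : ∏ k ∈ range (N + 1), c k * (1 - x k) = x (N + 1) / x 0 :=
    eq_div_of_mul_eq hx0.ne' (prod_range_mul_eq_of_succ_eq_mul fun k _ => by rw [hrec]; ring)
  have hsum : ∑ k ∈ range (N + 1), 2 * x k ≤ 5 * x (N + 1) := by
    have hgrowth : ∀ k < N + 1, 2 / 5 * x k ≤ x (k + 1) - x k := fun k hk => by
      rw [hrec]
      exact two_fifths_mul_le_logistic_sub (hc k).1 (hx k (mem_range.2 hk)) (hsmall k (by omega))
    have := mul_sum_range_le_sub_of_mul_le_sub hgrowth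
    rw [← mul_sum]; linarith
  have hxN : x (N + 1) ≤ 1 / 25 := by
    rw [hrec]
    linarith [logistic_le_four_mul (hc N).2 (hx N (by simp)) (by linarith [hsmall N le_rfl]),
      hsmall N le_rfl]
  have hlow := prod_mul_one_sub_mul_one_sub_sum_le_prod_mul_one_sub_two_mul hc0 hx hx'
  have hup := prod_mul_one_sub_two_mul_le_prod_mul_one_sub hc0 hx hx'
  rw [htel] at hlow hup
  constructor
  · calc 1 / 125 * (1 / x 0) = 1 / 100 / x 0 * (1 - 5 * (1 / 25)) := by ring
      _ ≤ x (N + 1) / x 0 * (1 - ∑ k ∈ range (N + 1), 2 * x k) := by gcongr; linarith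
      _ ≤ _ := hlow
  · calc _ ≤ x (N + 1) / x 0 := hup
      _ ≤ 1 / 25 / x 0 := by gcongr
      _ ≤ 125 * (1 / x 0) := by rw [div_eq_mul_one_div]; gcongr; norm_num
end

section
/- Suppose 0 < x₀ < 1/100, x_{k+1} = c(θ_k)p(x_k) with p(x) = x(1−x), 3/2 ≤ c(θ_k) ≤ 4, |∂_θ c(θ)| ≤ C₀ for all θ, and N ≥ 0 is the smallest integer with x_{N+1} ≥ 1/100. Then for every γ > 0, |∑_{k=0}^{N−1} ∂_θ c(θ_k)·p(x_k)·∏_{j=k+1}^{N} c(θ_j)p'(x_j)| = o(x₀^{−γ}) as x₀ → 0⁺. In fact the sum is bounded by a constant times N, and N = O(log(1/x₀)). -/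
set_option maxHeartbeats 1000000 in

lemma key_sum_bound
    (C₀ : ℝ) (hC₀ : 0 ≤ C₀) (c dc x : ℕ → ℝ) (N : ℕ)
    (hc : ∀ k, 3 / 2 ≤ c k ∧ c k ≤ 4)
    (hdc : ∀ k, |dc k| ≤ C₀)
    (hrec : ∀ k, x (k + 1) = c k * (x k * (1 - x k)))
    (h0 : 0 < x 0) (h0' : x 0 < 1 / 100) (hN : 1 / 100 ≤ x (N + 1))
    (hsm : ∀ k ≤ N, x k < 1 / 100) :
    |∑ k ∈ Finset.range N, dc k * (x k * (1 - x k)) *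
        ∏ j ∈ Finset.Icc (k + 1) N, c j * (1 - 2 * x j)| ≤ (C₀ + 1) * N ∧
    (N : ℝ) ≤ Real.logb (5 / 4) (1 / (20 * x 0)) := by
  have hpos : ∀ k, k ≤ N + 1 → 0 < x k := by
    intro k
    induction k with
    | zero => intro _; exact h0
    | succ n ih =>
      intro hn
      have hn' : n ≤ N := Nat.lt_succ_iff.mp hn
      have hxn := ih (le_trans hn' (Nat.le_succ N))
      have hsmn := hsm n hn'
      have hcn := (hc n).1
      rw [hrec n]
      have : (0:ℝ) < c n := by linarith
      exact mul_pos this (mul_pos hxn (by linarith))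
  have hgrow : ∀ k, k ≤ N → 5 / 4 * x k ≤ x (k + 1) := by
    intro k hk
    have hxk := hpos k (le_trans hk (Nat.le_succ N))
    have hsmk := hsm k hk
    have hck := (hc k).1
    rw [hrec k]
    have h1 : (5/4 : ℝ) ≤ c k * (1 - x k) := by nlinarith
    calc 5 / 4 * x k ≤ (c k * (1 - x k)) * x k :=
          mul_le_mul_of_nonneg_right h1 hxk.le
      _ = c k * (x k * (1 - x k)) := by ring
  have hpow : ∀ k, k ≤ N → (5 / 4 : ℝ) ^ k * x 0 ≤ x k := by
    intro k
    induction k with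
    | zero => intro _; simp
    | succ n ih =>
      intro hn
      have hn' : n ≤ N := le_trans (Nat.le_succ n) hn
      have h1 := ih hn'
      have h2 := hgrow n hn'
      have h3 : (5/4 : ℝ) ^ (n+1) * x 0 = 5/4 * ((5/4)^n * x 0) := by ring
      rw [h3]
      nlinarith
  have hXN : x N < 1 / 100 := hsm N le_rfl
  have hpowN : (5 / 4 : ℝ) ^ N ≤ 1 / (20 * x 0) := by
    have h1 := hpow N le_rfl
    rw [le_div_iff₀ (by positivity)]
    nlinarith
  have hlogN : (N : ℝ) ≤ Real.logb (5 / 4) (1 / (20 * x 0)) := by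
    have hb : (1 : ℝ) < 5 / 4 := by norm_num
    calc (N : ℝ) = Real.logb (5/4) ((5/4)^N) := by
            rw [Real.logb_pow, Real.logb_self_eq_one hb]; ring
      _ ≤ _ := (Real.logb_le_logb hb (by positivity) (by positivity)).mpr hpowN
  refine ⟨?_, hlogN⟩
  have htel : ∀ a n, x (a + n) = x a * ∏ j ∈ Finset.range n, (c (a + j) * (1 - x (a + j))) := by
    intro a n
    induction n with
    | zero => simp
    | succ m ih =>
      rw [Finset.prod_range_succ, ← mul_assoc, ← ih, ← Nat.add_assoc, hrec (a + m)]
      ring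
  have hXN1 : x (N + 1) ≤ 1 / 25 := by
    have hxn := hpos N (Nat.le_succ N)
    have hcn := hc N
    rw [hrec N]
    have h1 : x N * (1 - x N) ≤ x N := by nlinarith
    have h2 : (0:ℝ) ≤ x N * (1 - x N) := by nlinarith
    calc c N * (x N * (1 - x N)) ≤ 4 * (x N * (1 - x N)) :=
          mul_le_mul_of_nonneg_right hcn.2 h2
      _ ≤ 4 * x N := by linarith
      _ ≤ 1 / 25 := by linarith
  have hterm : ∀ k ∈ Finset.range N,
      |dc k * (x k * (1 - x k)) * ∏ j ∈ Finset.Icc (k + 1) N, c j * (1 - 2 * x j)| ≤ C₀ + 1 := by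
    intro k hk
    have hkN : k < N := Finset.mem_range.mp hk
    have hxk := hpos k (by omega)
    have hsmk := hsm k (le_of_lt hkN)
    set P := ∏ j ∈ Finset.Icc (k + 1) N, (c j * (1 - 2 * x j)) with hP
    set Q := ∏ j ∈ Finset.Icc (k + 1) N, (c j * (1 - x j)) with hQ
    have hfac : ∀ j ∈ Finset.Icc (k + 1) N, 0 ≤ c j * (1 - 2 * x j) ∧
        c j * (1 - 2 * x j) ≤ c j * (1 - x j) := by
      intro j hj
      have hj' := Finset.mem_Icc.mp hj
      have hxj := hpos j (by omega)
      have hsmj := hsm j hj'.2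
      have hcj := hc j
      constructor <;> nlinarith [hcj.1, hcj.2]
    have hP0 : 0 ≤ P := Finset.prod_nonneg fun j hj => (hfac j hj).1
    have hPQ : P ≤ Q := Finset.prod_le_prod (fun j hj => (hfac j hj).1)
      (fun j hj => (hfac j hj).2)
    have hQeq : x (k + 1) * Q = x (N + 1) := by
      have h1 : N + 1 = (k + 1) + (N - k) := by omega
      have h2 := htel (k + 1) (N - k)
      rw [hQ, ← Finset.Ico_add_one_right_eq_Icc, Finset.prod_Ico_eq_prod_range]
      have h3 : N + 1 - (k + 1) = N - k := by omega
      rw [h3, h1, h2]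
    have hxk1 : x (k + 1) = c k * (x k * (1 - x k)) := hrec k
    have hck := hc k
    have hQ0 : 0 ≤ Q := Finset.prod_nonneg fun j hj => le_trans (hfac j hj).1 (hfac j hj).2
    have hbound : x k * (1 - x k) * Q ≤ 2 / 3 * x (N + 1) := by
      have hc0 : (0:ℝ) < c k := by linarith [hck.1]
      have h4 : x k * (1 - x k) * Q = x (N + 1) / c k := by
        rw [← hQeq, hxk1]; field_simp
      rw [h4, div_le_iff₀ hc0]
      nlinarith [hpos (N+1) le_rfl, hck.1]
    rw [abs_mul, abs_mul]
    have hxx : 0 ≤ x k * (1 - x k) := by nlinarith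
    rw [abs_of_nonneg hxx, abs_of_nonneg hP0]
    have h1 : |dc k| * (x k * (1 - x k)) * P ≤ C₀ * (x k * (1 - x k) * Q) := by
      have hdk := hdc k
      have hdk0 : 0 ≤ |dc k| := abs_nonneg _
      have ha : x k * (1 - x k) * P ≤ x k * (1 - x k) * Q :=
        mul_le_mul_of_nonneg_left hPQ hxx
      have hb : 0 ≤ x k * (1 - x k) * P := mul_nonneg hxx hP0
      calc |dc k| * (x k * (1 - x k)) * P = |dc k| * (x k * (1 - x k) * P) := by ring
        _ ≤ C₀ * (x k * (1 - x k) * P) := mul_le_mul_of_nonneg_right hdk hb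
        _ ≤ C₀ * (x k * (1 - x k) * Q) := mul_le_mul_of_nonneg_left ha hC₀
    have h2 : C₀ * (x k * (1 - x k) * Q) ≤ C₀ * (2 / 3 * x (N + 1)) :=
      mul_le_mul_of_nonneg_left hbound hC₀
    have h3 : C₀ * (2 / 3 * x (N + 1)) ≤ C₀ * (2 / 75) :=
      mul_le_mul_of_nonneg_left (by linarith) hC₀
    linarith
  calc |∑ k ∈ Finset.range N, dc k * (x k * (1 - x k)) *
        ∏ j ∈ Finset.Icc (k + 1) N, c j * (1 - 2 * x j)|
      ≤ ∑ k ∈ Finset.range N, |dc k * (x k * (1 - x k)) *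
        ∏ j ∈ Finset.Icc (k + 1) N, c j * (1 - 2 * x j)| := Finset.abs_sum_le_sum_abs _ _
    _ ≤ ∑ _k ∈ Finset.range N, (C₀ + 1) := Finset.sum_le_sum hterm
    _ = (C₀ + 1) * N := by rw [Finset.sum_const, Finset.card_range]; ring

set_option maxHeartbeats 1000000 in


/-- Smallness of the sum of iterated derivative terms after the peak: with
|∂_θc| ≤ C₀, the sum ∑_{k=0}^{N−1} ∂_θc(θ_k)p(x_k)∏_{j=k+1}^{N} c(θ_j)p'(x_j)
is o(x₀^{−γ}) for every γ > 0 as x₀ → 0⁺ (uniformly over orbits); in fact it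
is bounded by a constant times N, and N ≤ log_{5/4}(1/(20x₀)). -/
theorem sum_products_small_after_peak
    (C₀ : ℝ) (hC₀ : 0 ≤ C₀) :
    (∃ K : ℝ, 0 < K ∧
      ∀ (c dc x : ℕ → ℝ) (N : ℕ),
        (∀ k, 3 / 2 ≤ c k ∧ c k ≤ 4) →
        (∀ k, |dc k| ≤ C₀) →
        (∀ k, x (k + 1) = c k * (x k * (1 - x k))) →
        0 < x 0 → x 0 < 1 / 100 → 1 / 100 ≤ x (N + 1) → (∀ k ≤ N, x k < 1 / 100) →
        |∑ k ∈ Finset.range N, dc k * (x k * (1 - x k)) *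
            ∏ j ∈ Finset.Icc (k + 1) N, c j * (1 - 2 * x j)| ≤ K * N ∧
        (N : ℝ) ≤ Real.logb (5 / 4) (1 / (20 * x 0))) ∧
    (∀ γ : ℝ, 0 < γ → ∀ ε : ℝ, 0 < ε → ∃ δ : ℝ, 0 < δ ∧
      ∀ (c dc x : ℕ → ℝ) (N : ℕ),
        (∀ k, 3 / 2 ≤ c k ∧ c k ≤ 4) →
        (∀ k, |dc k| ≤ C₀) →
        (∀ k, x (k + 1) = c k * (x k * (1 - x k))) →
        0 < x 0 → x 0 < 1 / 100 → 1 / 100 ≤ x (N + 1) → (∀ k ≤ N, x k < 1 / 100) →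
        x 0 < δ →
        |∑ k ∈ Finset.range N, dc k * (x k * (1 - x k)) *
            ∏ j ∈ Finset.Icc (k + 1) N, c j * (1 - 2 * x j)| ≤ ε * (x 0) ^ (-γ)) := by
  
  constructor
  · exact ⟨C₀ + 1, by linarith, fun c dc x N hc hdc hrec h0 h0' hN hsm =>
      key_sum_bound C₀ hC₀ c dc x N hc hdc hrec h0 h0' hN hsm⟩
  · intro γ hγ ε hε
    have hlog54 : 0 < Real.log (5 / 4) := Real.log_pos (by norm_num)
    set M : ℝ := (C₀ + 1) / (γ / 2 * Real.log (5 / 4)) with hM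
    have hM0 : 0 < M := by positivity
    refine ⟨(ε / M) ^ (2 / γ), Real.rpow_pos_of_pos (by positivity) _, ?_⟩
    intro c dc x N hc hdc hrec h0 h0' hN hsm hδ
    obtain ⟨hs, hl⟩ := key_sum_bound C₀ hC₀ c dc x N hc hdc hrec h0 h0' hN hsm
    set a : ℝ := x 0 ^ (-(γ / 2)) with ha_def
    have ha : 0 < a := Real.rpow_pos_of_pos h0 _
    have hinv : (1 / x 0) ^ (γ / 2) = a := by
      rw [ha_def, Real.rpow_neg h0.le, one_div, Real.inv_rpow h0.le]
    have hloga : Real.log (1 / (20 * x 0)) ≤ a / (γ / 2) := by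
      have h1 : Real.log (1 / (20 * x 0)) ≤ Real.log (1 / x 0) :=
        Real.log_le_log (by positivity)
          (by rw [div_le_div_iff₀ (by positivity) h0]; linarith)
      have h2 : Real.log (1 / x 0) ≤ (1 / x 0) ^ (γ / 2) / (γ / 2) :=
        Real.log_le_rpow_div (by positivity) (by positivity)
      rw [hinv] at h2
      linarith
    have hchain : |∑ k ∈ Finset.range N, dc k * (x k * (1 - x k)) *
        ∏ j ∈ Finset.Icc (k + 1) N, c j * (1 - 2 * x j)| ≤ M * a := by
      calc _ ≤ (C₀ + 1) * N := hs
        _ ≤ (C₀ + 1) * Real.logb (5 / 4) (1 / (20 * x 0)) :=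
            mul_le_mul_of_nonneg_left hl (by linarith)
        _ = (C₀ + 1) * (Real.log (1 / (20 * x 0)) / Real.log (5 / 4)) := rfl
        _ ≤ (C₀ + 1) * ((a / (γ / 2)) / Real.log (5 / 4)) := by
            apply mul_le_mul_of_nonneg_left _ (by linarith)
            exact div_le_div_of_nonneg_right hloga hlog54.le
        _ = M * a := by rw [hM]; field_simp
    -- x 0 ^ (γ/2) ≤ ε / M
    have hxhalf : x 0 ^ (γ / 2) ≤ ε / M := by
      calc x 0 ^ (γ / 2) ≤ ((ε / M) ^ (2 / γ)) ^ (γ / 2) :=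
            Real.rpow_le_rpow h0.le hδ.le (by positivity)
        _ = (ε / M) ^ (2 / γ * (γ / 2)) := by
            rw [← Real.rpow_mul (by positivity)]
        _ = ε / M := by
            rw [show 2 / γ * (γ / 2) = 1 by field_simp, Real.rpow_one]
    have hMx : M * x 0 ^ (γ / 2) ≤ ε := by
      have := mul_le_mul_of_nonneg_left hxhalf hM0.le
      rwa [mul_div_cancel₀ _ (ne_of_gt hM0)] at this
    have hone : x 0 ^ (γ / 2) * a = 1 := by
      rw [ha_def, ← Real.rpow_add h0]
      norm_num
    have hMa : M ≤ ε * a := by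
      have h5 : M * x 0 ^ (γ / 2) * a ≤ ε * a := mul_le_mul_of_nonneg_right hMx ha.le
      have h6 : M * x 0 ^ (γ / 2) * a = M := by rw [mul_assoc, hone, mul_one]
      linarith
    have hsq : x 0 ^ (-γ) = a * a := by
      rw [ha_def, ← Real.rpow_add h0]
      congr 1
      ring
    have hfinal : M * a ≤ ε * (a * a) := by nlinarith
    rw [hsq]
    linarith
end
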